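/- arXiv:2403.09656 — 2 statements merged into one kernel-verified Lean document; each statement's English description precedes it below -/
import Mathlib

section
/- If J is a Łojasiewicz ideal of smooth functions on an open set U ⊆ ℝⁿ (i.e., J is finitely generated and contains a function f whose zero set equals the common zero set Z(J) and which satisfies a Łojasiewicz inequality |f(x)| ≥ C·d(x, Z(J))^α locally on U), then Z(J) contains an open dense subset (in the subspace topology of Z(J)) that is a smooth submanifold of U. -/
open Metric Set Module Function

/-- Taylor-type bound: if all derivatives of `h` up to order `m-1` vanish at `y` and the `m`-th
derivative is bounded by `M` on a convex open set `s`, then `‖h x‖ ≤ M * ‖x - y‖ ^ m` on `s`. -/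
lemma taylor_aux {E : Type} [NormedAddCommGroup E] [NormedSpace ℝ E] :
    ∀ (m : ℕ) {F : Type} [NormedAddCommGroup F] [NormedSpace ℝ F] (h : E → F) (s : Set E) (y : E),
    Convex ℝ s → IsOpen s → y ∈ s → ContDiffOn ℝ (⊤ : ℕ∞) h s →
    (∀ j, j < m → iteratedFDeriv ℝ j h y = 0) →
    ∀ (M : ℝ), (∀ ξ ∈ s, ‖iteratedFDeriv ℝ m h ξ‖ ≤ M) →
    ∀ x ∈ s, ‖h x‖ ≤ M * ‖x - y‖ ^ m := by
  intro m
  induction m with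
  | zero =>
    intro F _ _ h s y hconv hop hy hsm _ M hM x hx
    simpa using (by simpa using hM x hx : ‖h x‖ ≤ M)
  | succ m IH =>
    intro F _ _ h s y hconv hop hy hsm hvan M hM x hx
    have hM0 : 0 ≤ M := le_trans (norm_nonneg _) (hM y hy)
    -- apply IH to fderiv h
    have hsm' : ContDiffOn ℝ (⊤ : ℕ∞) (fderiv ℝ h) s := hsm.fderiv_of_isOpen hop (by simp)
    have hvan' : ∀ j, j < m → iteratedFDeriv ℝ j (fderiv ℝ h) y = 0 := by
      intro j hj
      have : ‖iteratedFDeriv ℝ j (fderiv ℝ h) y‖ = 0 := by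
        rw [norm_iteratedFDeriv_fderiv, hvan (j+1) (by omega), norm_zero]
      simpa using this
    have hM' : ∀ ξ ∈ s, ‖iteratedFDeriv ℝ m (fderiv ℝ h) ξ‖ ≤ M := by
      intro ξ hξ; rw [norm_iteratedFDeriv_fderiv]; exact hM ξ hξ
    have hd : ∀ ξ ∈ s, ‖fderiv ℝ h ξ‖ ≤ M * ‖ξ - y‖ ^ m :=
      IH (fderiv ℝ h) s y hconv hop hy hsm' hvan' M hM'
    -- mean value on s ∩ closedBall y ‖x - y‖
    set t := s ∩ closedBall y ‖x - y‖ with ht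
    have htconv : Convex ℝ t := hconv.inter (convex_closedBall _ _)
    have hyt : y ∈ t := ⟨hy, by simp [mem_closedBall, dist_self, norm_nonneg]⟩
    have hxt : x ∈ t := ⟨hx, by simp [mem_closedBall, dist_eq_norm]⟩
    have hdiff : ∀ ξ ∈ t, DifferentiableAt ℝ h ξ := fun ξ hξ =>
      (hsm.contDiffAt (hop.mem_nhds hξ.1)).differentiableAt (by simp)
    have hbound : ∀ ξ ∈ t, ‖fderiv ℝ h ξ‖ ≤ M * ‖x - y‖ ^ m := by
      intro ξ hξ
      refine le_trans (hd ξ hξ.1) ?_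
      have : ‖ξ - y‖ ≤ ‖x - y‖ := by
        have := hξ.2; rwa [mem_closedBall, dist_eq_norm] at this
      exact mul_le_mul_of_nonneg_left (pow_le_pow_left₀ (norm_nonneg _) this m) hM0
    have key : ‖h x - h y‖ ≤ (M * ‖x - y‖ ^ m) * ‖x - y‖ :=
      Convex.norm_image_sub_le_of_norm_fderiv_le hdiff hbound htconv hyt hxt
    have hy0 : h y = 0 := by
      have := hvan 0 (by omega)
      have h2 : ‖iteratedFDeriv ℝ 0 h y‖ = 0 := by rw [this, norm_zero]
      rwa [norm_iteratedFDeriv_zero, norm_eq_zero] at h2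
    calc ‖h x‖ = ‖h x - h y‖ := by rw [hy0, sub_zero]
    _ ≤ (M * ‖x - y‖ ^ m) * ‖x - y‖ := key
    _ = M * ‖x - y‖ ^ (m + 1) := by ring

/-- The set of surjective continuous linear maps is open (finite-dimensional codomain). -/
lemma surj_open {E F : Type} [NormedAddCommGroup E] [NormedSpace ℝ E] [NormedAddCommGroup F]
    [NormedSpace ℝ F] [FiniteDimensional ℝ F] :
    IsOpen {T : E →L[ℝ] F | Function.Surjective T} := by
  rw [isOpen_iff_forall_mem_open]
  intro T hT
  have hsurj : LinearMap.range (T : E →ₗ[ℝ] F) = ⊤ := LinearMap.range_eq_top.2 hT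
  obtain ⟨S, hS⟩ := LinearMap.exists_rightInverse_of_surjective (T : E →ₗ[ℝ] F) hsurj
  set S' : F →L[ℝ] E := LinearMap.toContinuousLinearMap S
  have hTS : ∀ z : F, T (S' z) = z := by
    intro z
    have := LinearMap.congr_fun hS z
    simpa [S'] using this
  refine ⟨ball T (1 / (‖S'‖ + 1)), ?_, isOpen_ball, ?_⟩
  · intro T' hT'
    have hnorm : ‖(T' - T).comp S'‖ < 1 := by
      have h1 : ‖(T' - T).comp S'‖ ≤ ‖T' - T‖ * ‖S'‖ := ContinuousLinearMap.opNorm_comp_le _ _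
      have h2 : ‖T' - T‖ < 1 / (‖S'‖ + 1) := by
        rw [mem_ball, dist_eq_norm] at hT'; exact hT'
      have h3 : (0:ℝ) < ‖S'‖ + 1 := by positivity
      have h4 : ‖T' - T‖ * ‖S'‖ < 1 := by
        have h5 : ‖T' - T‖ * (‖S'‖ + 1) < (1 / (‖S'‖ + 1)) * (‖S'‖ + 1) := by
          apply mul_lt_mul_of_pos_right h2 h3
        rw [one_div_mul_cancel (ne_of_gt h3)] at h5
        nlinarith [norm_nonneg (T' - T)]
      linarith
    -- 1 - (-(T' - T).comp S') is a unit
    have hnorm' : ‖-((T' - T).comp S')‖ < 1 := by rwa [norm_neg]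
    set u := Units.oneSub (-(((T' - T).comp S') : F →L[ℝ] F)) hnorm' with hu_def
    have hcomp : T'.comp S' = (1 : F →L[ℝ] F) - -((T' - T).comp S') := by
      ext z
      have h6 := hTS z
      simp only [ContinuousLinearMap.comp_apply, ContinuousLinearMap.sub_apply,
        ContinuousLinearMap.neg_apply, ContinuousLinearMap.one_apply, sub_neg_eq_add,
        ContinuousLinearMap.add_apply]
      rw [h6]; abel
    intro z
    have hu : ((1 : F →L[ℝ] F) - -((T' - T).comp S')) = (u : F →L[ℝ] F) := by
      rw [hu_def, Units.val_oneSub]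
    have : T' (S' (((u⁻¹ : (F →L[ℝ] F)ˣ) : F →L[ℝ] F) z)) = z := by
      have h4 : (T'.comp S') (((u⁻¹ : (F →L[ℝ] F)ˣ) : F →L[ℝ] F) z) = z := by
        rw [hcomp, hu]
        have h7 := congrArg (fun (A : F →L[ℝ] F) => A z) u.mul_inv
        simp only [ContinuousLinearMap.mul_apply, ContinuousLinearMap.one_apply] at h7
        exact h7
      simpa [ContinuousLinearMap.comp_apply] using h4
    exact ⟨_, this⟩
  · simp [mem_ball, dist_self]; positivity

open Module

lemma iter_smooth {E F : Type} [NormedAddCommGroup E] [NormedSpace ℝ E] [NormedAddCommGroup F]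
    [NormedSpace ℝ F] (f : E → F) (U : Set E) (hU : IsOpen U) (hf : ContDiffOn ℝ (⊤ : ℕ∞) f U) :
    ∀ j, ContDiffOn ℝ (⊤ : ℕ∞) (iteratedFDeriv ℝ j f) U := by
  intro j
  rw [hU.contDiffOn_iff]
  intro w hw
  exact (hf.contDiffAt (hU.mem_nhds hw)).iteratedFDeriv_right (by exact_mod_cast le_top)

set_option maxHeartbeats 2000000 in
/-- Main density lemma: near every point of the zero set of a smooth function satisfying
a Łojasiewicz inequality, there is a point where the zero set looks like a submanifold. -/
lemma main_lemma : ∀ (d : ℕ) (E : Type) [NormedAddCommGroup E] [NormedSpace ℝ E]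
    [FiniteDimensional ℝ E], finrank ℝ E = d →
    ∀ (U : Set E), IsOpen U → ∀ (f : E → ℝ), ContDiffOn ℝ (⊤ : ℕ∞) f U →
    ∀ (Z : Set E), Z = {x ∈ U | f x = 0} →
    (∀ z ∈ U, ∃ V ∈ nhds z, ∃ C > (0:ℝ), ∃ α > (0:ℝ),
      ∀ x ∈ V ∩ U, C * (infDist x Z) ^ α ≤ |f x|) →
    ∀ z₀ ∈ Z, ∀ ε > (0:ℝ), ∃ z ∈ Z ∩ ball z₀ ε, ∃ c ≤ d,
      ∃ V : Set E, IsOpen V ∧ z ∈ V ∧ V ⊆ U ∧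
      ∃ F : E → EuclideanSpace ℝ (Fin c), ContDiffOn ℝ (⊤ : ℕ∞) F V ∧
        (∀ y ∈ V, (y ∈ Z ↔ F y = 0)) ∧ Function.Surjective (fderiv ℝ F z) := by
  intro d
  induction d with
  | zero =>
    intro E _ _ _ hE U hU f hf Z hZdef hLoj z₀ hz₀ ε hε
    haveI : Subsingleton E := (finrank_zero_iff (R := ℝ)).1 hE
    haveI : Subsingleton (EuclideanSpace ℝ (Fin 0)) :=
      ⟨fun a b => by ext i; exact Fin.elim0 i⟩
    have hz₀U : z₀ ∈ U := by rw [hZdef] at hz₀; exact hz₀.1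
    refine ⟨z₀, ⟨hz₀, mem_ball_self hε⟩, 0, le_refl 0, U, hU, hz₀U, subset_rfl,
      fun _ => 0, contDiffOn_const, ?_, fun b => ⟨0, Subsingleton.elim _ _⟩⟩
    intro y hy
    have : y = z₀ := Subsingleton.elim _ _
    subst this
    simp [hz₀, Subsingleton.elim (0 : EuclideanSpace ℝ (Fin 0)) 0]
  | succ m IH =>
    intro E _ _ _ hE U hU f hf Z hZdef hLoj z₀ hz₀ ε hε
    haveI : CompleteSpace E := FiniteDimensional.complete ℝ E
    have hZU : Z ⊆ U := by rw [hZdef]; exact sep_subset _ _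
    have hz₀U : z₀ ∈ U := hZU hz₀
    by_cases hint : (interior Z ∩ ball z₀ ε).Nonempty
    · obtain ⟨z, hz1, hz2⟩ := hint
      haveI : Subsingleton (EuclideanSpace ℝ (Fin 0)) :=
        ⟨fun a b => by ext i; exact Fin.elim0 i⟩
      refine ⟨z, ⟨interior_subset hz1, hz2⟩, 0, Nat.zero_le _,
        interior Z ∩ ball z₀ ε, isOpen_interior.inter isOpen_ball, ⟨hz1, hz2⟩,
        fun w hw => hZU (interior_subset hw.1), fun _ => 0, contDiffOn_const, ?_,
        fun b => ⟨0, Subsingleton.elim _ _⟩⟩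
      intro y hy
      exact ⟨fun _ => Subsingleton.elim _ _, fun _ => interior_subset hy.1⟩
    · -- Case B : no interior points nearby
      have hint' : interior Z ∩ ball z₀ ε = ∅ := not_nonempty_iff_eq_empty.1 hint
      obtain ⟨V₀, hV₀, C, hC, α, hα, hLest⟩ := hLoj z₀ hz₀U
      -- choose ε₁
      have hnhd : U ∩ V₀ ∩ ball z₀ ε ∈ nhds z₀ :=
        Filter.inter_mem (Filter.inter_mem (hU.mem_nhds hz₀U) hV₀) (ball_mem_nhds z₀ hε)
      obtain ⟨ε₁, hε₁pos, hε₁sub⟩ :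
          ∃ ε₁ > 0, closedBall z₀ ε₁ ⊆ U ∩ V₀ ∩ ball z₀ ε := by
        obtain ⟨r, hr, hsub⟩ := Metric.mem_nhds_iff.1 hnhd
        exact ⟨r/2, by linarith, (closedBall_subset_ball (by linarith)).trans hsub⟩
      have hballU : ball z₀ ε₁ ⊆ U := fun w hw => (hε₁sub (ball_subset_closedBall hw)).1.1
      have hballV₀ : ball z₀ ε₁ ⊆ V₀ := fun w hw => (hε₁sub (ball_subset_closedBall hw)).1.2
      have hballε : ball z₀ ε₁ ⊆ ball z₀ ε := fun w hw => (hε₁sub (ball_subset_closedBall hw)).2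
      -- the exponent and derivative bound
      set N : ℕ := ⌊α⌋₊ + 1 with hN
      have hNα : α < (N : ℝ) := by
        push_cast [hN]
        exact Nat.lt_floor_add_one α
      obtain ⟨M₀, hM₀⟩ := (isCompact_closedBall z₀ ε₁).exists_bound_of_continuousOn
        ((iter_smooth f U hU hf N).continuousOn.mono
          (fun w hw => (hε₁sub hw).1.1))
      set M : ℝ := max M₀ 1 with hM
      have hM1 : (1:ℝ) ≤ M := le_max_right _ _
      have hMpos : (0:ℝ) < M := lt_of_lt_of_le one_pos hM1
      have hMb : ∀ x ∈ ball z₀ ε₁, ‖iteratedFDeriv ℝ N f x‖ ≤ M :=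
        fun x hx => le_trans (hM₀ x (ball_subset_closedBall hx)) (le_max_left _ _)
      -- choose ρ
      set β : ℝ := (N : ℝ) - α with hβ
      have hβpos : 0 < β := by simp [hβ]; linarith
      set δ₂ : ℝ := min 1 ((C/(2*M)) ^ (1/β)) with hδ₂
      have hδ₂pos : 0 < δ₂ := by
        apply lt_min one_pos
        apply Real.rpow_pos_of_pos
        positivity
      set ρ : ℝ := min (ε₁/4) (δ₂/2) with hρ
      have hρpos : 0 < ρ := lt_min (by linarith) (by linarith)
      have hρε₁ : 3 * ρ < ε₁ := by
        have : ρ ≤ ε₁ / 4 := min_le_left _ _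
        linarith
      have hkey : M * (2*ρ) ^ β ≤ C / 2 := by
        have h2ρ : 0 ≤ 2*ρ := by linarith
        have h2ρδ : 2*ρ ≤ δ₂ := by
          have : ρ ≤ δ₂/2 := min_le_right _ _
          linarith
        have h1 : (2*ρ) ^ β ≤ δ₂ ^ β := Real.rpow_le_rpow h2ρ h2ρδ (le_of_lt hβpos)
        have h2 : δ₂ ^ β ≤ ((C/(2*M)) ^ (1/β)) ^ β :=
          Real.rpow_le_rpow (le_of_lt hδ₂pos) (min_le_right _ _) (le_of_lt hβpos)
        have h3 : ((C/(2*M)) ^ (1/β)) ^ β = C/(2*M) := by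
          rw [← Real.rpow_mul (by positivity), one_div_mul_cancel (ne_of_gt hβpos),
            Real.rpow_one]
        have h4 : M * (2*ρ)^β ≤ M * (C/(2*M)) := by
          apply mul_le_mul_of_nonneg_left _ (le_of_lt hMpos)
          calc (2*ρ)^β ≤ δ₂ ^ β := h1
          _ ≤ _ := h2.trans_eq h3
        calc M * (2*ρ)^β ≤ M * (C/(2*M)) := h4
        _ = C/2 := by field_simp
      -- B2 : a point of finite order
      have hB2 : ∃ y ∈ Z ∩ ball z₀ ε₁, ∃ j, j < N ∧ iteratedFDeriv ℝ j f y ≠ 0 := by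
        -- z₀ is not interior to Z, pick x outside Z nearby
        have hz₀ni : z₀ ∉ interior Z := by
          intro h
          have h2 : z₀ ∈ interior Z ∩ ball z₀ ε := ⟨h, mem_ball_self hε⟩
          rw [hint'] at h2
          exact h2
        obtain ⟨x, hxball, hxZ⟩ : ∃ x ∈ ball z₀ ρ, x ∉ Z := by
          by_contra h
          push_neg at h
          exact hz₀ni (interior_maximal h isOpen_ball (mem_ball_self hρpos))
        have hxz₀ : dist x z₀ < ρ := mem_ball.1 hxball
        have hxε₁ : x ∈ ball z₀ ε₁ := by rw [mem_ball]; linarith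
        have hxU : x ∈ U := hballU hxε₁
        have hcbball : closedBall x (2*ρ) ⊆ ball z₀ ε₁ := by
          intro w hw
          rw [mem_closedBall] at hw
          rw [mem_ball]
          calc dist w z₀ ≤ dist w x + dist x z₀ := dist_triangle _ _ _
          _ < ε₁ := by linarith
        have hcbU : closedBall x (2*ρ) ⊆ U := hcbball.trans hballU
        set A : Set E := Z ∩ closedBall x (2*ρ) with hA
        have hAeq : A = closedBall x (2*ρ) ∩ f ⁻¹' {0} := by
          ext w
          constructor
          · rintro ⟨hwZ, hwc⟩
            rw [hZdef] at hwZ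
            exact ⟨hwc, hwZ.2⟩
          · rintro ⟨hwc, hwf⟩
            exact ⟨by rw [hZdef]; exact ⟨hcbU hwc, hwf⟩, hwc⟩
        have hAclosed : IsClosed A := by
          rw [hAeq]
          exact (hf.continuousOn.mono hcbU).preimage_isClosed_of_isClosed
            (isCompact_closedBall x (2*ρ)).isClosed isClosed_singleton
        have hAcompact : IsCompact A :=
          (isCompact_closedBall x (2*ρ)).of_isClosed_subset hAclosed inter_subset_right
        have hz₀A : z₀ ∈ A := ⟨hz₀, by rw [mem_closedBall, dist_comm]; linarith⟩
        obtain ⟨y, hyA, hyd⟩ := hAcompact.exists_infDist_eq_dist ⟨z₀, hz₀A⟩ x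
        have hyZ : y ∈ Z := hyA.1
        have hdxy : dist x y ≤ dist x z₀ := by
          rw [← hyd]
          exact infDist_le_dist_of_mem hz₀A
        have hinf : infDist x Z = dist x y := by
          apply le_antisymm (infDist_le_dist_of_mem hyZ)
          by_contra hlt
          push_neg at hlt
          obtain ⟨w, hwZ, hww⟩ := (infDist_lt_iff ⟨z₀, hz₀⟩).1 hlt
          by_cases hwc : dist x w ≤ 2*ρ
          · have : dist x y ≤ dist x w := by
              rw [← hyd]
              exact infDist_le_dist_of_mem ⟨hwZ, by rwa [mem_closedBall, dist_comm]⟩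
            linarith
          · push_neg at hwc
            linarith
        have hd₀pos : 0 < dist x y := by
          rw [dist_pos]
          intro h
          exact hxZ (h ▸ hyZ)
        have hd₀ρ : dist x y < ρ := lt_of_le_of_lt hdxy hxz₀
        have hyball : y ∈ ball z₀ ε₁ := hcbball (by
          rw [mem_closedBall, dist_comm]
          linarith)
        -- suppose all derivatives of order < N vanish at y: contradiction
        by_contra hcon
        push_neg at hcon
        have hvan : ∀ j, j < N → iteratedFDeriv ℝ j f y = 0 := by
          intro j hj
          by_contra hne
          exact hne (hcon y ⟨hyZ, hyball⟩ j hj)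
        have htay := taylor_aux N f (ball z₀ ε₁) y (convex_ball z₀ ε₁) isOpen_ball hyball
          (hf.mono hballU) hvan M hMb x hxε₁
        have hLoj2 : C * (dist x y) ^ α ≤ |f x| := by
          rw [← hinf]
          exact hLest x ⟨hballV₀ hxε₁, hxU⟩
        have hxy : ‖x - y‖ = dist x y := by rw [dist_eq_norm]
        rw [hxy] at htay
        have ht2ρ : dist x y ≤ 2*ρ := by linarith
        have htN : (dist x y : ℝ) ^ (N:ℕ) = dist x y ^ ((N:ℝ)) :=
          (Real.rpow_natCast (dist x y) N).symm
        have h5 : |f x| ≤ M * dist x y ^ (N:ℕ) := htay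
        have h6 : M * dist x y ^ (N:ℕ) = (M * dist x y ^ β) * dist x y ^ α := by
          rw [htN, mul_assoc, ← Real.rpow_add hd₀pos]
          congr 2
          simp [hβ]
        have h7 : M * dist x y ^ β ≤ C/2 := by
          calc M * dist x y ^ β ≤ M * (2*ρ) ^ β := by
                apply mul_le_mul_of_nonneg_left _ (le_of_lt hMpos)
                exact Real.rpow_le_rpow (le_of_lt hd₀pos) ht2ρ (le_of_lt hβpos)
          _ ≤ C/2 := hkey
        have hchain : C * dist x y ^ α ≤ (C/2) * dist x y ^ α := by
          calc C * dist x y ^ α ≤ |f x| := hLoj2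
          _ ≤ M * dist x y ^ (N:ℕ) := h5
          _ = (M * dist x y ^ β) * dist x y ^ α := h6
          _ ≤ (C/2) * dist x y ^ α :=
              mul_le_mul_of_nonneg_right h7 (Real.rpow_nonneg (le_of_lt hd₀pos) α)
        have htαpos : 0 < dist x y ^ α := Real.rpow_pos_of_pos hd₀pos α
        nlinarith
      -- B3 : minimal vanishing order k = kp+1 on Z ∩ ball z₀ ε₁, with witness y₁
      have hkpack : ∃ k, k ≠ 0 ∧ (∀ j, j < k → ∀ w ∈ Z ∩ ball z₀ ε₁,
          iteratedFDeriv ℝ j f w = 0) ∧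
          ∃ y₁ ∈ Z ∩ ball z₀ ε₁, iteratedFDeriv ℝ k f y₁ ≠ 0 := by
        classical
        obtain ⟨y, hy, j, hj, hne⟩ := hB2
        have hex : ∃ j, ∃ y ∈ Z ∩ ball z₀ ε₁, iteratedFDeriv ℝ j f y ≠ 0 := ⟨j, y, hy, hne⟩
        refine ⟨Nat.find hex, ?_, ?_, Nat.find_spec hex⟩
        · intro h0
          obtain ⟨y', hy', hne'⟩ := h0 ▸ Nat.find_spec hex
          apply hne'
          have hfy' : f y' = 0 := by
            have := hy'.1
            rw [hZdef] at this
            exact this.2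
          ext1 v
          rw [iteratedFDeriv_zero_apply, hfy']
          rfl
        · intro j' hj' w hw
          by_contra hne2
          exact Nat.find_min hex hj' ⟨w, hw, hne2⟩
      obtain ⟨k, hk0, hvanZ, y₁, hy₁mem, hy₁ne⟩ := hkpack
      obtain ⟨kp, rfl⟩ := Nat.exists_eq_succ_of_ne_zero hk0
      obtain ⟨v, hv⟩ : ∃ v : Fin (kp+1) → E, iteratedFDeriv ℝ (kp+1) f y₁ v ≠ 0 := by
        by_contra h
        push_neg at h
        exact hy₁ne (ContinuousMultilinearMap.ext fun v => by
          rw [h v]; rfl)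
      have hy₁U : y₁ ∈ U := hZU hy₁mem.1
      -- the function φ cutting out a hypersurface containing Z locally
      set evalCLM : (ContinuousMultilinearMap ℝ (fun _ : Fin kp => E) ℝ) →L[ℝ] ℝ :=
        ContinuousMultilinearMap.apply ℝ (fun _ : Fin kp => E) ℝ (Fin.tail v) with hevalCLM
      set φ : E → ℝ := fun x => iteratedFDeriv ℝ kp f x (Fin.tail v) with hφ
      have hφsmooth : ContDiffOn ℝ (⊤ : ℕ∞) φ U := by
        have h1 : ContDiffOn ℝ (⊤ : ℕ∞) (fun x => evalCLM (iteratedFDeriv ℝ kp f x)) U :=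
          evalCLM.contDiff.comp_contDiffOn (iter_smooth f U hU hf kp)
        exact h1
      have hφZ : ∀ w ∈ Z ∩ ball z₀ ε₁, φ w = 0 := by
        intro w hw
        have := hvanZ kp (Nat.lt_succ_self kp) w hw
        simp only [hφ, this]
        rfl
      have hGdiff : DifferentiableAt ℝ (iteratedFDeriv ℝ kp f) y₁ :=
        ((iter_smooth f U hU hf kp).contDiffAt (hU.mem_nhds hy₁U)).differentiableAt (by simp)
      have hφdiffU : ∀ w ∈ U, DifferentiableAt ℝ φ w := fun w hw =>
        (hφsmooth.contDiffAt (hU.mem_nhds hw)).differentiableAt (by simp)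
      set ℓ : E →L[ℝ] ℝ := fderiv ℝ φ y₁ with hℓ
      have hℓval : ℓ (v 0) = iteratedFDeriv ℝ (kp+1) f y₁ v := by
        have h1 : HasFDerivAt φ
            (evalCLM.comp (fderiv ℝ (iteratedFDeriv ℝ kp f) y₁)) y₁ :=
          evalCLM.hasFDerivAt.comp y₁ hGdiff.hasFDerivAt
        rw [hℓ, h1.fderiv]
        rw [iteratedFDeriv_succ_apply_left]
        rfl
      set c₀ : ℝ := iteratedFDeriv ℝ (kp+1) f y₁ v with hc₀
      have hc₀ne : c₀ ≠ 0 := hv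
      set u : E := c₀⁻¹ • (v 0) with hu
      have hℓu : ℓ u = 1 := by
        rw [hu, map_smul, hℓval, smul_eq_mul, inv_mul_cancel₀ hc₀ne]
      -- the hyperplane P = ker ℓ
      set P : Submodule ℝ E := LinearMap.ker (ℓ : E →ₗ[ℝ] ℝ) with hP
      have hdimP : finrank ℝ P = m := by
        have hsurj : LinearMap.range (ℓ : E →ₗ[ℝ] ℝ) = ⊤ := by
          rw [LinearMap.range_eq_top]
          intro t
          exact ⟨t • u, by rw [ContinuousLinearMap.coe_coe, map_smul, hℓu, smul_eq_mul, mul_one]⟩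
        have h1 := LinearMap.finrank_range_add_finrank_ker (ℓ : E →ₗ[ℝ] ℝ)
        rw [hE] at h1
        have h2 : finrank ℝ (LinearMap.range (ℓ : E →ₗ[ℝ] ℝ)) = 1 := by
          have : LinearMap.range (ℓ : E →ₗ[ℝ] ℝ) = ⊤ := hsurj
          rw [this, finrank_top, finrank_self]
        rw [h2] at h1
        have h3 : LinearMap.ker (ℓ : E →ₗ[ℝ] ℝ) = P := rfl
        rw [h3] at h1
        omega
      -- the projection onto P and the straightening linear equivalence
      have hmemP : ∀ x : E, x - ℓ x • u ∈ P := by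
        intro x
        rw [hP, LinearMap.mem_ker, ContinuousLinearMap.coe_coe]
        have : ℓ (x - ℓ x • u) = ℓ x - ℓ x * ℓ u := by
          rw [map_sub, map_smul, smul_eq_mul]
        rw [this, hℓu, mul_one, sub_self]
      set projP : E →L[ℝ] P :=
        (ContinuousLinearMap.id ℝ E - ℓ.smulRight u).codRestrict P
          (fun x => by simpa using hmemP x) with hprojP
      have hprojP_apply : ∀ x : E, ((projP x : P) : E) = x - ℓ x • u := by
        intro x
        simp [hprojP, ContinuousLinearMap.smulRight_apply]
      set Ψlin : (P × ℝ) →L[ℝ] E :=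
        P.subtypeL.comp (ContinuousLinearMap.fst ℝ P ℝ) +
          (ContinuousLinearMap.snd ℝ P ℝ).smulRight u with hΨlin
      have hΨlin_apply : ∀ pt : P × ℝ, Ψlin pt = (pt.1 : E) + pt.2 • u := by
        intro pt
        simp [hΨlin, ContinuousLinearMap.smulRight_apply]
      have hleft : Function.LeftInverse Ψlin (projP.prod ℓ) := by
        intro x
        rw [ContinuousLinearMap.prod_apply, hΨlin_apply]
        simp only [hprojP_apply]
        abel
      have hright : Function.RightInverse Ψlin (projP.prod ℓ) := by
        rintro ⟨p, t⟩
        rw [hΨlin_apply, ContinuousLinearMap.prod_apply]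
        have hℓp : ℓ (p : E) = 0 := LinearMap.mem_ker.1 p.2
        have hsnd : ℓ ((p : E) + t • u) = t := by
          rw [map_add, map_smul, hℓp, hℓu, smul_eq_mul, mul_one, zero_add]
        have hfst : projP ((p : E) + t • u) = p := by
          apply Subtype.ext
          rw [hprojP_apply, hsnd]
          abel
        rw [hfst, hsnd]
      set e₁ : E ≃L[ℝ] P × ℝ :=
        ContinuousLinearEquiv.equivOfInverse (projP.prod ℓ) Ψlin hleft hright with he₁
      -- B4 : straightening the hypersurface {φ = 0} via the inverse function theorem
      set Φ : E → P × ℝ := fun x => (projP x, φ x) with hΦdef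
      have hΦsmoothU : ContDiffOn ℝ (⊤ : ℕ∞) Φ U :=
        (projP.contDiff.contDiffOn).prodMk hφsmooth
      have hφy₁has : HasFDerivAt φ ℓ y₁ := by
        have := (hφdiffU y₁ hy₁U).hasFDerivAt
        rwa [← hℓ] at this
      have hΦhas : HasFDerivAt Φ ((projP.prod ℓ) : E →L[ℝ] P × ℝ) y₁ :=
        projP.hasFDerivAt.prodMk hφy₁has
      have he₁coe : ((e₁ : E ≃L[ℝ] P × ℝ) : E →L[ℝ] P × ℝ) = projP.prod ℓ := rfl
      have hΦhas' : HasFDerivAt Φ ((e₁ : E ≃L[ℝ] P × ℝ) : E →L[ℝ] P × ℝ) y₁ := by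
        rw [he₁coe]; exact hΦhas
      have hΦat : ContDiffAt ℝ (⊤ : ℕ∞) Φ y₁ := hΦsmoothU.contDiffAt (hU.mem_nhds hy₁U)
      set PH : OpenPartialHomeomorph E (P × ℝ) :=
        hΦat.toOpenPartialHomeomorph Φ hΦhas' (by simp) with hPH
      have hPHcoe : ⇑PH = Φ := rfl
      have hy₁src : y₁ ∈ PH.source :=
        ContDiffAt.mem_toOpenPartialHomeomorph_source hΦat hΦhas' (by simp)
      have hΦy₁tgt : Φ y₁ ∈ PH.target :=
        ContDiffAt.image_mem_toOpenPartialHomeomorph_target hΦat hΦhas' (by simp)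
      have hsymmΦy₁ : PH.symm (Φ y₁) = y₁ := PH.left_inv hy₁src
      have hΨat : ContDiffAt ℝ (⊤ : ℕ∞) (⇑PH.symm) (Φ y₁) := by
        apply PH.contDiffAt_symm hΦy₁tgt
        · rw [hsymmΦy₁]; exact hΦhas'
        · rw [hsymmΦy₁]; exact hΦat
      obtain ⟨T₀', hT₀'mem, hΨonT₀'⟩ : ∃ u ∈ nhds (Φ y₁), ContDiffOn ℝ (⊤ : ℕ∞) (⇑PH.symm) u := by
        have hSopen : IsOpen (U ∩ fderiv ℝ Φ ⁻¹' range ((↑) : (E ≃L[ℝ] P × ℝ) → E →L[ℝ] P × ℝ)) :=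
          ContinuousOn.isOpen_inter_preimage
            (hΦsmoothU.continuousOn_fderiv_of_isOpen hU (by simp)) hU ContinuousLinearEquiv.isOpen
        refine ⟨PH.target ∩ PH.symm ⁻¹' (U ∩ fderiv ℝ Φ ⁻¹'
          range ((↑) : (E ≃L[ℝ] P × ℝ) → E →L[ℝ] P × ℝ)), ?_, ?_⟩
        · refine (ContinuousOn.isOpen_inter_preimage PH.symm.continuousOn PH.open_target
            hSopen).mem_nhds ⟨hΦy₁tgt, ?_⟩
          rw [mem_preimage, hsymmΦy₁]
          exact ⟨hy₁U, e₁, hΦhas'.fderiv.symm⟩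
        · intro q hq
          obtain ⟨hqU, e, he⟩ := hq.2
          have hat : ContDiffAt ℝ (⊤ : ℕ∞) Φ (PH.symm q) := hΦsmoothU.contDiffAt (hU.mem_nhds hqU)
          have hd : HasFDerivAt PH (e : E →L[ℝ] P × ℝ) (PH.symm q) := by
            rw [he, hPHcoe]; exact (hat.differentiableAt (by simp)).hasFDerivAt
          exact (PH.contDiffAt_symm hq.1 hd (by rw [hPHcoe]; exact hat)).contDiffWithinAt
      set T₀ : Set (P × ℝ) := interior T₀' with hT₀
      have hT₀open : IsOpen T₀ := isOpen_interior
      have hΦy₁T₀ : Φ y₁ ∈ T₀ := mem_interior_iff_mem_nhds.2 hT₀'mem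
      have hΨT₀ : ContDiffOn ℝ (⊤ : ℕ∞) (⇑PH.symm) T₀ := hΨonT₀'.mono interior_subset
      -- choose the radius R
      have hO₁open : IsOpen (PH.source ∩ ball z₀ ε₁) := PH.open_source.inter isOpen_ball
      have hO'open : IsOpen ((PH.source ∩ ball z₀ ε₁) ∩ Φ ⁻¹' T₀) :=
        ContinuousOn.isOpen_inter_preimage
          (hΦsmoothU.continuousOn.mono (fun w hw => hballU hw.2)) hO₁open hT₀open
      have hy₁O' : y₁ ∈ (PH.source ∩ ball z₀ ε₁) ∩ Φ ⁻¹' T₀ :=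
        ⟨⟨hy₁src, hy₁mem.2⟩, hΦy₁T₀⟩
      obtain ⟨r, hrpos, hrsub⟩ := Metric.isOpen_iff.1 hO'open y₁ hy₁O'
      set R : ℝ := r/3 with hR
      have hRpos : 0 < R := by simp only [hR]; linarith
      have hball3R : ball y₁ (3*R) ⊆ (PH.source ∩ ball z₀ ε₁) ∩ Φ ⁻¹' T₀ := by
        rw [show 3*R = r by rw [hR]; ring]
        exact hrsub
      have hRsub3R : ball y₁ R ⊆ ball y₁ (3*R) := ball_subset_ball (by linarith)
      have hRsrc : ball y₁ (3*R) ⊆ PH.source := fun w hw => (hball3R hw).1.1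
      have hRball : ball y₁ (3*R) ⊆ ball z₀ ε₁ := fun w hw => (hball3R hw).1.2
      have hRT₀ : ∀ w ∈ ball y₁ (3*R), Φ w ∈ T₀ := fun w hw => (hball3R hw).2
      have hRU : ball y₁ (3*R) ⊆ U := hRball.trans hballU
      set L : ℝ := ‖projP‖ + 1 with hL
      have hL1 : (1:ℝ) ≤ L := by
        simp only [hL]
        have := norm_nonneg projP
        linarith
      have hLpos : (0:ℝ) < L := lt_of_lt_of_le one_pos hL1
      -- the target-side neighbourhood and the slice
      set T : Set (P × ℝ) := (PH.target ∩ T₀) ∩ (⇑PH.symm ⁻¹' (ball y₁ R)) with hT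
      have hTopen : IsOpen T :=
        ContinuousOn.isOpen_inter_preimage
          (PH.symm.continuousOn.mono inter_subset_left)
          (PH.open_target.inter hT₀open) isOpen_ball
      set U' : Set P := {p : P | ((p, (0:ℝ)) : P × ℝ) ∈ T} with hU'
      have hU'open : IsOpen U' :=
        hTopen.preimage (continuous_id.prodMk continuous_const)
      set f' : P → ℝ := fun p => f (PH.symm (p, 0)) with hf'
      set Z' : Set P := {p : P | p ∈ U' ∧ f' p = 0} with hZ'
      -- membership facts
      have hTfacts : ∀ p : P, p ∈ U' →
          ((p,(0:ℝ)) ∈ PH.target ∧ (p,(0:ℝ)) ∈ T₀ ∧ PH.symm (p,(0:ℝ)) ∈ ball y₁ R) :=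
        fun p hp => ⟨hp.1.1, hp.1.2, hp.2⟩
      -- the key transfer of points of Z into Z'
      have hgoodW : ∀ w, w ∈ ball y₁ R → w ∈ Z →
          projP w ∈ Z' ∧ Φ w = ((projP w, (0:ℝ)) : P × ℝ) ∧
            PH.symm ((projP w, (0:ℝ)) : P × ℝ) = w := by
        intro w hwball hwZ
        have hw3R : w ∈ ball y₁ (3*R) := hRsub3R hwball
        have hφw : φ w = 0 := hφZ w ⟨hwZ, hRball hw3R⟩
        have hΦw : Φ w = ((projP w, (0:ℝ)) : P × ℝ) := by
          rw [hΦdef]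
          simp only [hφw]
        have hwsrc : w ∈ PH.source := hRsrc hw3R
        have hΦwtgt : Φ w ∈ PH.target := PH.map_source hwsrc
        have hΦwT₀ : Φ w ∈ T₀ := hRT₀ w hw3R
        have hsymmw : PH.symm (Φ w) = w := PH.left_inv hwsrc
        have hsymmw' : PH.symm ((projP w, (0:ℝ)) : P × ℝ) = w := by
          rw [← hΦw]; exact hsymmw
        have hmemT : ((projP w, (0:ℝ)) : P × ℝ) ∈ T := by
          rw [← hΦw] at *
          exact ⟨⟨hΦwtgt, hΦwT₀⟩, by rw [mem_preimage, hsymmw]; exact hwball⟩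
        have hfw : f w = 0 := by rw [hZdef] at hwZ; exact hwZ.2
        refine ⟨⟨hmemT, ?_⟩, hΦw, hsymmw'⟩
        rw [hf']
        simp only
        rw [hsymmw', hfw]
      -- smoothness of f' on U'
      have hcomp1 : ContDiffOn ℝ (⊤ : ℕ∞) (fun p : P => PH.symm ((p, (0:ℝ)) : P × ℝ)) U' := by
        have hinl : ContDiffOn ℝ (⊤ : ℕ∞) (fun p : P => ((p, (0:ℝ)) : P × ℝ)) U' :=
          (ContinuousLinearMap.inl ℝ P ℝ).contDiff.contDiffOn.congr (fun p _ => rfl)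
        exact hΨT₀.comp hinl (fun p hp => (hTfacts p hp).2.1)
      have hf'smooth : ContDiffOn ℝ (⊤ : ℕ∞) f' U' := by
        apply hf.comp hcomp1
        intro p hp
        exact hballU (hRball (hRsub3R (hTfacts p hp).2.2))
      have hz₀'pack := hgoodW y₁ (mem_ball_self hRpos) hy₁mem.1
      have hz₀'Z' : projP y₁ ∈ Z' := hz₀'pack.1
      -- the Łojasiewicz inequality for the slice function f'
      have hLoj' : ∀ z' ∈ U', ∃ V ∈ nhds z', ∃ C' > (0:ℝ), ∃ α' > (0:ℝ),
          ∀ p ∈ V ∩ U', C' * infDist p Z' ^ α' ≤ |f' p| := by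
        intro z' hz'
        by_cases hfz : f' z' = 0
        · -- z' is a zero of f'
          set x_z : E := PH.symm ((z', (0:ℝ)) : P × ℝ) with hx_z
          have hx_zball : x_z ∈ ball y₁ R := (hTfacts z' hz').2.2
          have hx_zU : x_z ∈ U := hballU (hRball (hRsub3R hx_zball))
          have hx_zZ : x_z ∈ Z := by
            rw [hZdef]
            exact ⟨hx_zU, hfz⟩
          set s_z : ℝ := R - dist x_z y₁ with hs_z
          have hs_zpos : 0 < s_z := by
            have := mem_ball.1 hx_zball
            simp only [hs_z]
            linarith
          have hcontat : ContinuousAt (fun p : P => PH.symm ((p,(0:ℝ)) : P × ℝ)) z' :=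
            hcomp1.continuousOn.continuousAt (hU'open.mem_nhds hz')
          obtain ⟨δz, hδzpos, hδz⟩ := Metric.continuousAt_iff.1 hcontat (s_z/4) (by positivity)
          have hCL : (0:ℝ) < C / L ^ α := div_pos hC (Real.rpow_pos_of_pos hLpos α)
          refine ⟨ball z' δz, ball_mem_nhds _ hδzpos, C / L ^ α, hCL, α, hα, ?_⟩
          intro p hp
          obtain ⟨hpball, hpU'⟩ := hp
          set x : E := PH.symm ((p,(0:ℝ)) : P × ℝ) with hxdef
          have hxball : x ∈ ball y₁ R := (hTfacts p hpU').2.2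
          have hxU : x ∈ U := hballU (hRball (hRsub3R hxball))
          have hxV₀ : x ∈ V₀ := hballV₀ (hRball (hRsub3R hxball))
          have hxdist : dist x x_z < s_z/4 := hδz (mem_ball.1 hpball)
          have hσ : infDist x Z ≤ dist x x_z := infDist_le_dist_of_mem hx_zZ
          have hpx : projP x = p := by
            have hrt : PH ((PH.symm) ((p,(0:ℝ)) : P × ℝ)) = ((p,(0:ℝ)) : P × ℝ) :=
              PH.right_inv (hTfacts p hpU').1
            have hΦx : Φ x = ((p,(0:ℝ)) : P × ℝ) := hrt
            exact congrArg Prod.fst hΦx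
          have hkey2 : infDist p Z' ≤ L * infDist x Z := by
            refine le_of_forall_pos_le_add ?_
            intro η hη
            set η' : ℝ := min (η / L) (s_z/4) with hη'
            have hη'pos : 0 < η' := lt_min (by positivity) (by positivity)
            have hlt : infDist x Z < infDist x Z + η' := lt_add_of_pos_right _ hη'pos
            obtain ⟨y', hy'Z, hy'd⟩ := (infDist_lt_iff ⟨z₀, hz₀⟩).1 hlt
            have hy'ball : y' ∈ ball y₁ R := by
              rw [mem_ball]
              have d1 : dist y' y₁ ≤ dist y' x + dist x x_z + dist x_z y₁ :=
                (dist_triangle _ _ _).trans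
                  (by linarith [dist_triangle y' x x_z, dist_triangle x x_z y₁,
                    dist_triangle y' x y₁])
              have d2 : dist y' x < infDist x Z + η' := by
                rw [dist_comm]; exact hy'd
              have d3 : η' ≤ s_z/4 := min_le_right _ _
              have d4 : dist x_z y₁ = R - s_z := by simp only [hs_z]; ring
              linarith
            obtain ⟨hy'Z', hΦy', hsymm'⟩ := hgoodW y' hy'ball hy'Z
            have hdistP : dist p (projP y') ≤ L * dist x y' := by
              rw [← hpx, dist_eq_norm]
              have hsub : (projP x) - (projP y') = projP (x - y') := (map_sub projP x y').symm
              rw [hsub]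
              calc ‖projP (x - y')‖ ≤ ‖projP‖ * ‖x - y'‖ := projP.le_opNorm _
              _ ≤ L * ‖x - y'‖ := by
                  apply mul_le_mul_of_nonneg_right _ (norm_nonneg _)
                  simp only [hL]; linarith
              _ = L * dist x y' := by rw [dist_eq_norm]
            have hLη' : L * η' ≤ η := by
              have h8 : η' ≤ η / L := min_le_left _ _
              calc L * η' ≤ L * (η / L) := mul_le_mul_of_nonneg_left h8 (le_of_lt hLpos)
              _ = η := by field_simp
            calc infDist p Z' ≤ dist p (projP y') := infDist_le_dist_of_mem hy'Z'
            _ ≤ L * dist x y' := hdistP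
            _ ≤ L * (infDist x Z + η') :=
                mul_le_mul_of_nonneg_left (le_of_lt hy'd) (le_of_lt hLpos)
            _ = L * infDist x Z + L * η' := by ring
            _ ≤ L * infDist x Z + η := by linarith
          have hLojx : C * infDist x Z ^ α ≤ |f x| := hLest x ⟨hxV₀, hxU⟩
          have hmono : infDist p Z' ^ α ≤ (L * infDist x Z) ^ α :=
            Real.rpow_le_rpow infDist_nonneg hkey2 (le_of_lt hα)
          have hsplit : (L * infDist x Z) ^ α = L ^ α * infDist x Z ^ α :=
            Real.mul_rpow (le_of_lt hLpos) infDist_nonneg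
          have hLαpos : (0:ℝ) < L ^ α := Real.rpow_pos_of_pos hLpos α
          have hfeq : f' p = f x := rfl
          rw [hfeq]
          calc (C / L ^ α) * infDist p Z' ^ α
              ≤ (C / L ^ α) * (L ^ α * infDist x Z ^ α) := by
                rw [← hsplit]
                exact mul_le_mul_of_nonneg_left hmono (le_of_lt hCL)
          _ = C * infDist x Z ^ α := by field_simp
          _ ≤ |f x| := hLojx
        · -- f' z' ≠ 0 : trivial neighbourhood
          set b : ℝ := |f' z'| / 2 with hb
          have hbpos : 0 < b := by
            simp only [hb]
            have := abs_pos.2 hfz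
            linarith
          have hVopen : IsOpen (U' ∩ f' ⁻¹' {t : ℝ | b < |t|}) :=
            ContinuousOn.isOpen_inter_preimage hf'smooth.continuousOn hU'open
              (isOpen_lt continuous_const continuous_abs)
          have hz'V : z' ∈ U' ∩ f' ⁻¹' {t : ℝ | b < |t|} := by
            refine ⟨hz', ?_⟩
            simp only [mem_preimage, mem_setOf_eq, hb]
            have := abs_pos.2 hfz
            linarith
          set B : ℝ := dist z' (projP y₁) + 1 with hB
          have hBpos : (0:ℝ) < B := by
            simp only [hB]
            have := dist_nonneg (x := z') (y := projP y₁)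
            linarith
          have hBαpos : (0:ℝ) < B ^ α := Real.rpow_pos_of_pos hBpos α
          refine ⟨(U' ∩ f' ⁻¹' {t : ℝ | b < |t|}) ∩ ball z' 1,
            (hVopen.inter isOpen_ball).mem_nhds ⟨hz'V, mem_ball_self one_pos⟩,
            b / B ^ α, div_pos hbpos hBαpos, α, hα, ?_⟩
          intro p hp
          obtain ⟨⟨⟨hpU', hpf⟩, hpball⟩, _⟩ := hp
          have hbp : b < |f' p| := hpf
          have hinfB : infDist p Z' ≤ B := by
            calc infDist p Z' ≤ dist p (projP y₁) := infDist_le_dist_of_mem hz₀'Z'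
            _ ≤ dist p z' + dist z' (projP y₁) := dist_triangle _ _ _
            _ ≤ B := by
                have := mem_ball.1 hpball
                simp only [hB]
                linarith
          have hmono2 : infDist p Z' ^ α ≤ B ^ α :=
            Real.rpow_le_rpow infDist_nonneg hinfB (le_of_lt hα)
          calc (b / B ^ α) * infDist p Z' ^ α ≤ (b / B ^ α) * B ^ α :=
              mul_le_mul_of_nonneg_left hmono2 (le_of_lt (div_pos hbpos hBαpos))
          _ = b := by field_simp
          _ ≤ |f' p| := le_of_lt hbp
      -- apply the induction hypothesis on the slice
      obtain ⟨z's, ⟨hz'sZ', hz'sball⟩, c', hc'm, V', hV'open, hz'V', hV'U', F', hF'smooth,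
        hF'iff, hF'surj⟩ := IH P hdimP U' hU'open f' hf'smooth Z' hZ' hLoj'
          (projP y₁) hz₀'Z' 1 one_pos
      -- transfer the good point back to E
      set zs : E := PH.symm ((z's, (0:ℝ)) : P × ℝ) with hzs
      have hz'sU' : z's ∈ U' := hz'sZ'.1
      have hzsball : zs ∈ ball y₁ R := (hTfacts z's hz'sU').2.2
      have hzsU : zs ∈ U := hballU (hRball (hRsub3R hzsball))
      have hzsZ : zs ∈ Z := by
        rw [hZdef]
        exact ⟨hzsU, hz'sZ'.2⟩
      have hzsε : zs ∈ ball z₀ ε := hballε (hRball (hRsub3R hzsball))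
      have hΦzs : Φ zs = ((z's, (0:ℝ)) : P × ℝ) := PH.right_inv (hTfacts z's hz'sU').1
      have hprojzs : projP zs = z's := congrArg Prod.fst hΦzs
      -- the codomain equivalence
      have hfr : finrank ℝ (EuclideanSpace ℝ (Fin c') × ℝ) =
          finrank ℝ (EuclideanSpace ℝ (Fin (c'+1))) := by
        rw [finrank_prod, finrank_euclideanSpace_fin, finrank_euclideanSpace_fin, finrank_self]
      set e₂ : (EuclideanSpace ℝ (Fin c') × ℝ) ≃L[ℝ] EuclideanSpace ℝ (Fin (c'+1)) :=
        ContinuousLinearEquiv.ofFinrankEq hfr with he₂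
      set Fbig : E → EuclideanSpace ℝ (Fin (c'+1)) := fun x => e₂ (F' (projP x), φ x) with hFbig
      set V : Set E := ball y₁ R ∩ projP ⁻¹' V' with hVdef
      have hVopen : IsOpen V := isOpen_ball.inter (hV'open.preimage projP.continuous)
      have hzsV : zs ∈ V := ⟨hzsball, by rw [mem_preimage, hprojzs]; exact hz'V'⟩
      have hVsubU : V ⊆ U := fun w hw => hballU (hRball (hRsub3R hw.1))
      have hFbigsmooth : ContDiffOn ℝ (⊤ : ℕ∞) Fbig V := by
        have h1 : ContDiffOn ℝ (⊤ : ℕ∞) (fun x => (F' (projP x), φ x)) V :=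
          (hF'smooth.comp (projP.contDiff.contDiffOn) (fun w hw => hw.2)).prodMk
            (hφsmooth.mono hVsubU)
        exact e₂.toContinuousLinearMap.contDiff.comp_contDiffOn h1
      have hFiff : ∀ w ∈ V, (w ∈ Z ↔ Fbig w = 0) := by
        intro w hw
        have hwball : w ∈ ball y₁ R := hw.1
        have hwV' : projP w ∈ V' := hw.2
        constructor
        · intro hwZ
          obtain ⟨hwZ', hΦw, hsymmw⟩ := hgoodW w hwball hwZ
          have hφw : φ w = 0 := congrArg Prod.snd hΦw
          have hF'w : F' (projP w) = 0 := (hF'iff (projP w) hwV').1 hwZ'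
          show e₂ (F' (projP w), φ w) = 0
          rw [hF'w, hφw]
          exact (map_eq_zero_iff e₂ e₂.injective).2 rfl
        · intro h0
          have hpair : ((F' (projP w), φ w) : EuclideanSpace ℝ (Fin c') × ℝ) = 0 :=
            e₂.map_eq_zero_iff.1 h0
          have hF'0 : F' (projP w) = 0 := (Prod.mk_eq_zero.1 hpair).1
          have hφ0 : φ w = 0 := (Prod.mk_eq_zero.1 hpair).2
          have hwZ' : projP w ∈ Z' := (hF'iff (projP w) hwV').2 hF'0
          have hw3R : w ∈ ball y₁ (3*R) := hRsub3R hwball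
          have hwsrc : w ∈ PH.source := hRsrc hw3R
          have hΦw : Φ w = ((projP w, (0:ℝ)) : P × ℝ) := by
            rw [hΦdef]
            simp only [hφ0]
          have hwid : PH.symm ((projP w, (0:ℝ)) : P × ℝ) = w := by
            rw [← hΦw]
            exact PH.left_inv hwsrc
          have hfw : f w = 0 := by
            have h9 : f (PH.symm ((projP w, (0:ℝ)) : P × ℝ)) = 0 := hwZ'.2
            rwa [hwid] at h9
          rw [hZdef]
          exact ⟨hVsubU hw, hfw⟩
      have hFsurj : Function.Surjective (fderiv ℝ Fbig zs) := by
        have hφzshas : HasFDerivAt φ (fderiv ℝ φ zs) zs := (hφdiffU zs hzsU).hasFDerivAt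
        set ℓ₂ : E →L[ℝ] ℝ := fderiv ℝ φ zs with hℓ₂
        set A : E →L[ℝ] P × ℝ := projP.prod ℓ₂ with hAdef
        have hΦhasz : HasFDerivAt Φ A zs := projP.hasFDerivAt.prodMk hφzshas
        have hsymdiff : DifferentiableAt ℝ (⇑PH.symm) (Φ zs) := by
          rw [hΦzs]
          exact (hΨT₀.contDiffAt (hT₀open.mem_nhds (hTfacts z's hz'sU').2.1)).differentiableAt
            (by simp)
        have hcompid : (fderiv ℝ (⇑PH.symm) (Φ zs)).comp A = ContinuousLinearMap.id ℝ E := by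
          have h1 : HasFDerivAt (fun w => PH.symm (Φ w))
              ((fderiv ℝ (⇑PH.symm) (Φ zs)).comp A) zs :=
            hsymdiff.hasFDerivAt.comp zs hΦhasz
          have h2 : HasFDerivAt (fun w => PH.symm (Φ w)) (ContinuousLinearMap.id ℝ E) zs := by
            apply (hasFDerivAt_id zs).congr_of_eventuallyEq
            filter_upwards [isOpen_ball.mem_nhds hzsball] with w hw
            exact PH.left_inv (hRsrc (hRsub3R hw))
          exact h1.unique h2
        have hAinj : Function.Injective ⇑A := by
          intro a b hab
          have h3 := congrArg (⇑(fderiv ℝ (⇑PH.symm) (Φ zs))) hab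
          have h4 := congrArg (fun (T : E →L[ℝ] E) => T a) hcompid
          have h5 := congrArg (fun (T : E →L[ℝ] E) => T b) hcompid
          simp only [ContinuousLinearMap.coe_comp', comp_apply,
            ContinuousLinearMap.coe_id', id_eq] at h4 h5
          rw [← h4, ← h5]
          exact h3
        have hAsurj : Function.Surjective ⇑A := by
          have hker : LinearMap.ker (A : E →ₗ[ℝ] P × ℝ) = ⊥ := LinearMap.ker_eq_bot.2 hAinj
          have h6 := LinearMap.finrank_range_add_finrank_ker (A : E →ₗ[ℝ] P × ℝ)
          rw [hker, finrank_bot, add_zero, hE] at h6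
          have h7 : finrank ℝ (P × ℝ) = m + 1 := by
            rw [finrank_prod, hdimP, finrank_self]
          have h8 : LinearMap.range (A : E →ₗ[ℝ] P × ℝ) = ⊤ :=
            Submodule.eq_top_of_finrank_eq (by rw [h6, h7])
          intro q
          obtain ⟨a, ha⟩ := LinearMap.range_eq_top.1 h8 q
          exact ⟨a, ha⟩
        have hB'has : HasFDerivAt F' (fderiv ℝ F' z's) (projP zs) := by
          rw [hprojzs]
          exact ((hF'smooth.contDiffAt (hV'open.mem_nhds hz'V')).differentiableAt
            (by simp)).hasFDerivAt
        set B' : P →L[ℝ] EuclideanSpace ℝ (Fin c') := fderiv ℝ F' z's with hB'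
        have hfsthas : HasFDerivAt (fun x => F' (projP x)) (B'.comp projP) zs :=
          hB'has.comp zs projP.hasFDerivAt
        have hGhas : HasFDerivAt (fun x => ((F' (projP x), φ x) :
            EuclideanSpace ℝ (Fin c') × ℝ)) ((B'.comp projP).prod ℓ₂) zs :=
          hfsthas.prodMk hφzshas
        have hFhas : HasFDerivAt Fbig
            ((e₂.toContinuousLinearMap).comp ((B'.comp projP).prod ℓ₂)) zs :=
          e₂.toContinuousLinearMap.hasFDerivAt.comp zs hGhas
        rw [hFhas.fderiv]
        intro wt
        obtain ⟨ab, hab⟩ := e₂.surjective wt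
        obtain ⟨qa, hqa⟩ := hF'surj ab.1
        obtain ⟨xa, hxa⟩ := hAsurj ((qa, ab.2) : P × ℝ)
        have hxa' : projP xa = qa ∧ ℓ₂ xa = ab.2 := by
          have h10 : ((projP xa, ℓ₂ xa) : P × ℝ) = (qa, ab.2) := hxa
          exact ⟨congrArg Prod.fst h10, congrArg Prod.snd h10⟩
        refine ⟨xa, ?_⟩
        show e₂.toContinuousLinearMap (((B'.comp projP).prod ℓ₂) xa) = wt
        have h11 : ((B'.comp projP).prod ℓ₂) xa = (B' (projP xa), ℓ₂ xa) := rfl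
        rw [h11, hxa'.1, hxa'.2]
        have h12 : B' qa = ab.1 := by rw [hB']; exact hqa
        rw [h12]
        have h13 : e₂.toContinuousLinearMap ab = e₂ ab := rfl
        rw [show ((ab.1, ab.2) : EuclideanSpace ℝ (Fin c') × ℝ) = ab from rfl, h13, hab]
      exact ⟨zs, ⟨hzsZ, hzsε⟩, c'+1, Nat.succ_le_succ hc'm, V, hVopen, hzsV, hVsubU,
        Fbig, hFbigsmooth, hFiff, hFsurj⟩


open Metric Set

/-- `s` is a smooth submanifold of the open set `U ⊆ ℝⁿ`: near each of its points it is
the zero set of a smooth submersion. -/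
def IsSmoothSubmanifoldIn (n : ℕ) (U s : Set (EuclideanSpace ℝ (Fin n))) : Prop :=
  ∀ x ∈ s, ∃ d : ℕ, d ≤ n ∧
    ∃ V : Set (EuclideanSpace ℝ (Fin n)), IsOpen V ∧ x ∈ V ∧ V ⊆ U ∧
      ∃ F : EuclideanSpace ℝ (Fin n) → EuclideanSpace ℝ (Fin (n - d)),
        ContDiffOn ℝ (⊤ : ℕ∞) F V ∧ (∀ y ∈ V, (y ∈ s ↔ F y = 0)) ∧
        Function.Surjective (fderiv ℝ F x)

theorem lojasiewicz_ideal_zero_set_contains_dense_submanifold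
    (n : ℕ) (U : Set (EuclideanSpace ℝ (Fin n))) (hU : IsOpen U)
    (J : Set (EuclideanSpace ℝ (Fin n) → ℝ))
    -- J is an ideal of smooth functions on U
    (hsmooth : ∀ g ∈ J, ContDiffOn ℝ (⊤ : ℕ∞) g U)
    (hadd : ∀ g ∈ J, ∀ h ∈ J, (g + h) ∈ J)
    (hmul : ∀ g ∈ J, ∀ φ : EuclideanSpace ℝ (Fin n) → ℝ, ContDiffOn ℝ (⊤ : ℕ∞) φ U → (φ * g) ∈ J)
    -- J is finitely generated
    (hfg : ∃ (k : ℕ) (g : Fin k → (EuclideanSpace ℝ (Fin n) → ℝ)),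
      (∀ i, g i ∈ J) ∧ ∀ h ∈ J, ∃ c : Fin k → (EuclideanSpace ℝ (Fin n) → ℝ),
        (∀ i, ContDiffOn ℝ (⊤ : ℕ∞) (c i) U) ∧ ∀ x ∈ U, h x = ∑ i, c i x * g i x)
    -- the common zero set of J
    (Z : Set (EuclideanSpace ℝ (Fin n))) (hZ : Z = {x ∈ U | ∀ g ∈ J, g x = 0})
    -- some f ∈ J has Z(f) = Z(J) and satisfies a Łojasiewicz inequality locally on U
    (hLoj : ∃ f ∈ J, {x ∈ U | f x = 0} = Z ∧
      ∀ z ∈ U, ∃ V ∈ nhds z, ∃ C > (0 : ℝ), ∃ α > (0 : ℝ),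
        ∀ x ∈ V ∩ U, C * (infDist x Z) ^ α ≤ |f x|) :
    -- conclusion: Z contains a subset, open and dense in Z, which is a smooth submanifold of U
    ∃ M ⊆ Z, (∃ W : Set (EuclideanSpace ℝ (Fin n)), IsOpen W ∧ M = Z ∩ W) ∧
      Z ⊆ closure M ∧ IsSmoothSubmanifoldIn n U M := by
  classical
  obtain ⟨f, hfJ, hfZ, hfLoj⟩ := hLoj
  have hfsmooth := hsmooth f hfJ
  have hmain := main_lemma n (EuclideanSpace ℝ (Fin n)) finrank_euclideanSpace_fin U hU f
    hfsmooth Z hfZ.symm hfLoj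
  -- the set of good points with chosen data
  set G : Set (EuclideanSpace ℝ (Fin n)) := {z | z ∈ Z ∧ ∃ c ≤ n,
    ∃ V : Set (EuclideanSpace ℝ (Fin n)), IsOpen V ∧ z ∈ V ∧ V ⊆ U ∧
      ∃ F : EuclideanSpace ℝ (Fin n) → EuclideanSpace ℝ (Fin c), ContDiffOn ℝ (⊤ : ℕ∞) F V ∧
        (∀ y ∈ V, (y ∈ Z ↔ F y = 0)) ∧ Function.Surjective (fderiv ℝ F z)} with hG
  have hdense : ∀ z₀ ∈ Z, ∀ ε > (0:ℝ), ∃ z ∈ G, z ∈ ball z₀ ε := by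
    intro z₀ hz₀ ε hε
    obtain ⟨z, ⟨hzZ, hzball⟩, c, hc, V, hVopen, hzV, hVU, F, hFsm, hFiff, hFsurj⟩ :=
      hmain z₀ hz₀ ε hε
    exact ⟨z, ⟨hzZ, c, hc, V, hVopen, hzV, hVU, F, hFsm, hFiff, hFsurj⟩, hzball⟩
  have hchoice : ∀ z : G, ∃ c, c ≤ n ∧
      ∃ V : Set (EuclideanSpace ℝ (Fin n)), IsOpen V ∧ (z : EuclideanSpace ℝ (Fin n)) ∈ V ∧
        V ⊆ U ∧ ∃ F : EuclideanSpace ℝ (Fin n) → EuclideanSpace ℝ (Fin c),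
        ContDiffOn ℝ (⊤ : ℕ∞) F V ∧ (∀ y ∈ V, (y ∈ Z ↔ F y = 0)) ∧
        Function.Surjective (fderiv ℝ F (z : EuclideanSpace ℝ (Fin n))) := by
    rintro ⟨z, hz⟩
    obtain ⟨_, c, hc, V, h1, h2, h3, F, h4, h5, h6⟩ := hz
    exact ⟨c, hc, V, h1, h2, h3, F, h4, h5, h6⟩
  choose c hc V hVopen hzV hVU F hFsm hFiff hFsurj using hchoice
  -- shrink each neighbourhood to where the derivative stays surjective
  set W' : G → Set (EuclideanSpace ℝ (Fin n)) := fun z =>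
    V z ∩ (fderiv ℝ (F z)) ⁻¹' {T | Function.Surjective T} with hW'
  have hW'open : ∀ z : G, IsOpen (W' z) := by
    intro z
    exact ContinuousOn.isOpen_inter_preimage
      ((hFsm z).continuousOn_fderiv_of_isOpen (hVopen z) (by simp)) (hVopen z) surj_open
  have hzW' : ∀ z : G, (z : EuclideanSpace ℝ (Fin n)) ∈ W' z :=
    fun z => ⟨hzV z, hFsurj z⟩
  set W : Set (EuclideanSpace ℝ (Fin n)) := ⋃ z : G, W' z with hW
  have hWopen : IsOpen W := isOpen_iUnion hW'open
  refine ⟨Z ∩ W, inter_subset_left, ⟨W, hWopen, rfl⟩, ?_, ?_⟩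
  · -- density
    intro z₀ hz₀
    rw [Metric.mem_closure_iff]
    intro ε hε
    obtain ⟨z, hzG, hzball⟩ := hdense z₀ hz₀ ε hε
    refine ⟨z, ⟨hzG.1, ?_⟩, ?_⟩
    · exact mem_iUnion.2 ⟨⟨z, hzG⟩, hzW' ⟨z, hzG⟩⟩
    · rw [dist_comm]
      exact mem_ball.1 hzball
  · -- submanifold property
    intro x hx
    obtain ⟨hxZ, hxW⟩ := hx
    obtain ⟨z, hxWz⟩ := mem_iUnion.1 hxW
    refine ⟨n - c z, Nat.sub_le n (c z), W' z, hW'open z, hxWz, (fun w hw => hVU z hw.1), ?_⟩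
    have hcc : n - (n - c z) = c z := Nat.sub_sub_self (hc z)
    rw [hcc]
    refine ⟨F z, (hFsm z).mono inter_subset_left, ?_, hxWz.2⟩
    intro y hy
    constructor
    · intro hyM
      exact ((hFiff z) y hy.1).1 hyM.1
    · intro hy0
      refine ⟨((hFiff z) y hy.1).2 hy0, mem_iUnion.2 ⟨z, hy⟩⟩
end

section
/- Let f : U → ℝ be smooth on an open set U ⊆ ℝⁿ and satisfy the gradient Łojasiewicz inequality ‖∇f(x)‖ ≥ C·|f(x)|^θ near a point p ∈ Z(f) for some C > 0 and 0 < θ < 1. Then there is a neighborhood of p on which dist(x, Z(f)) ≤ C'·|f(x)|^{1−θ} for some constant C' > 0. -/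
set_option maxHeartbeats 1000000


open Metric Set Filter Topology

private lemma aux_abs_rpow_pos {E : Type*} [NormedAddCommGroup E] [NormedSpace ℝ E]
    {f : E → ℝ} {L : E →L[ℝ] ℝ} {y : E} (hf : HasFDerivAt f L y) (hfy : 0 < f y)
    (q : ℝ) (hq : 0 < q) :
    ∃ G : E →L[ℝ] ℝ, HasFDerivAt (fun z => |f z| ^ q) G y ∧ ‖G‖ = q * |f y| ^ (q - 1) * ‖L‖ := by
  refine ⟨(q * (f y) ^ (q - 1)) • L, ?_, ?_⟩
  · have h1 : HasFDerivAt (fun z => (f z) ^ q) ((q * (f y) ^ (q - 1)) • L) y :=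
      (Real.hasDerivAt_rpow_const (p := q) (Or.inl hfy.ne')).comp_hasFDerivAt y hf
    refine h1.congr_of_eventuallyEq ?_
    have hev : ∀ᶠ z in 𝓝 y, 0 < f z := hf.continuousAt.eventually (eventually_gt_nhds hfy)
    exact hev.mono fun z hz => by show |f z| ^ q = f z ^ q; rw [abs_of_pos hz]
  · have h2 : ‖(q * (f y) ^ (q - 1)) • L‖ = ‖q * (f y) ^ (q - 1)‖ * ‖L‖ :=
      norm_smul _ L
    rw [h2, Real.norm_eq_abs,
      abs_of_pos (mul_pos hq (Real.rpow_pos_of_pos hfy _)), abs_of_pos hfy]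

private lemma aux_abs_rpow {E : Type*} [NormedAddCommGroup E] [NormedSpace ℝ E]
    {f : E → ℝ} {L : E →L[ℝ] ℝ} {y : E} (hf : HasFDerivAt f L y) (hfy : f y ≠ 0)
    (q : ℝ) (hq : 0 < q) :
    ∃ G : E →L[ℝ] ℝ, HasFDerivAt (fun z => |f z| ^ q) G y ∧ ‖G‖ = q * |f y| ^ (q - 1) * ‖L‖ := by
  rcases hfy.lt_or_gt with h | h
  · obtain ⟨G, hG, hGn⟩ := aux_abs_rpow_pos (f := fun z => -f z) hf.neg
      (by linarith : 0 < -f y) q hq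
    refine ⟨G, ?_, ?_⟩
    · simpa [abs_neg] using hG
    · simpa [abs_neg] using hGn
  · exact aux_abs_rpow_pos hf h q hq

theorem dist_estimate_of_gradient_lojasiewicz
    (n : ℕ) (U : Set (EuclideanSpace ℝ (Fin n))) (hU : IsOpen U)
    (f : EuclideanSpace ℝ (Fin n) → ℝ) (hf : ContDiffOn ℝ (⊤ : ℕ∞) f U)
    (Z : Set (EuclideanSpace ℝ (Fin n))) (hZ : Z = {x ∈ U | f x = 0})
    (p : EuclideanSpace ℝ (Fin n)) (hp : p ∈ Z)
    (C θ : ℝ) (hC : 0 < C) (hθ0 : 0 < θ) (hθ1 : θ < 1)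
    -- gradient Łojasiewicz inequality near p
    (hLoj : ∃ V ∈ nhds p, V ⊆ U ∧ ∀ x ∈ V, C * |f x| ^ θ ≤ ‖gradient f x‖) :
    ∃ V' ∈ nhds p, ∃ C' > (0 : ℝ), ∀ x ∈ V', infDist x Z ≤ C' * |f x| ^ (1 - θ) := by
  obtain ⟨V, hV, hVU, hVloj⟩ := hLoj
  set c : ℝ := C * (1 - θ) with hcdef
  have h1θ : 0 < 1 - θ := by linarith
  have hc0 : 0 < c := mul_pos hC h1θ
  obtain ⟨ε, hε0, hball⟩ := Metric.mem_nhds_iff.1 hV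
  set r : ℝ := ε / 3 with hrdef
  have hr0 : 0 < r := by positivity
  set K : Set (EuclideanSpace ℝ (Fin n)) := closedBall p (2 * r) with hKdef
  have hKV : K ⊆ V :=
    (closedBall_subset_ball (by rw [hrdef]; linarith)).trans hball
  have hKU : K ⊆ U := hKV.trans hVU
  set g : EuclideanSpace ℝ (Fin n) → ℝ := fun z => |f z| ^ (1 - θ) with hgdef
  have hg0 : ∀ z, 0 ≤ g z := fun z => Real.rpow_nonneg (abs_nonneg _) _
  have hfc : ContinuousOn f U := hf.continuousOn
  have hgcontU : ContinuousOn g U :=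
    (hfc.abs).rpow_const fun x _ => Or.inr h1θ.le
  -- the small neighborhood
  set V' : Set (EuclideanSpace ℝ (Fin n)) := ball p r ∩ g ⁻¹' (Iio (c * r / 2)) with hV'def
  have hbK : ball p r ⊆ K :=
    ball_subset_closedBall.trans (closedBall_subset_closedBall (by linarith))
  have hbU : ball p r ⊆ U := hbK.trans hKU
  have hV'open : IsOpen V' :=
    (hgcontU.mono hbU).isOpen_inter_preimage isOpen_ball isOpen_Iio
  have hfp : f p = 0 := by rw [hZ] at hp; exact hp.2
  have hpV' : p ∈ V' := by
    constructor
    · exact mem_ball_self hr0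
    · show g p < c * r / 2
      rw [hgdef]
      simp only [hfp, abs_zero]
      rw [Real.zero_rpow (by linarith : (1:ℝ) - θ ≠ 0)]
      positivity
  refine ⟨V', hV'open.mem_nhds hpV', 2 / c, by positivity, ?_⟩
  intro x hx
  obtain ⟨hxball, hxg⟩ := hx
  have hxg' : g x < c * r / 2 := hxg
  have hxK : x ∈ K := hbK hxball
  -- minimize F over K
  set F : EuclideanSpace ℝ (Fin n) → ℝ := fun z => g z + (c / 2) * dist x z with hFdef
  have hFcont : ContinuousOn F K :=
    (hgcontU.mono hKU).add
      ((continuous_const.mul (continuous_const.dist continuous_id)).continuousOn)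
  obtain ⟨y, hyK, hymin⟩ := (isCompact_closedBall p (2 * r)).exists_isMinOn
    ⟨x, hxK⟩ hFcont
  have hFyx : g y + (c / 2) * dist x y ≤ g x := by
    have h := hymin hxK
    simpa [hFdef] using h
  have hdxy : dist x y ≤ 2 / c * g x := by
    have h1 : (c / 2) * dist x y ≤ g x := by nlinarith [hg0 y]
    rw [div_mul_eq_mul_div, le_div_iff₀ hc0]
    nlinarith
  have hdxyr : dist x y < r := by
    calc dist x y ≤ 2 / c * g x := hdxy
    _ < 2 / c * (c * r / 2) := by
        exact mul_lt_mul_of_pos_left hxg' (by positivity)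
    _ = r := by field_simp
  have hyball : y ∈ ball p (2 * r) := by
    have ht : dist y p ≤ dist y x + dist x p := dist_triangle y x p
    rw [mem_ball]
    have hxp := mem_ball.1 hxball
    rw [dist_comm] at hdxyr
    linarith
  -- claim f y = 0
  have hfy : f y = 0 := by
    by_contra hfy
    have hyU : U ∈ 𝓝 y := hU.mem_nhds (hKU hyK)
    have hdiff : DifferentiableAt ℝ f y :=
      ((hf.contDiffAt hyU).differentiableAt (by simp))
    set L := fderiv ℝ f y with hLdef
    have hL : HasFDerivAt f L y := hdiff.hasFDerivAt
    obtain ⟨G, hG, hGn⟩ := aux_abs_rpow hL hfy (1 - θ) h1θ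
    have hLnorm : ‖L‖ = ‖gradient f y‖ := by
      rw [gradient, hLdef, LinearIsometryEquiv.norm_map]
    have hfyabs : 0 < |f y| := abs_pos.2 hfy
    have hGc : c ≤ ‖G‖ := by
      rw [hGn, hLnorm]
      have h2 : C * |f y| ^ θ ≤ ‖gradient f y‖ := hVloj y (hKV hyK)
      have h3 : (1 - θ) * |f y| ^ (1 - θ - 1) * (C * |f y| ^ θ) ≤
          (1 - θ) * |f y| ^ (1 - θ - 1) * ‖gradient f y‖ := by
        apply mul_le_mul_of_nonneg_left h2
        positivity
      have h5 : |f y| ^ (1 - θ - 1) * |f y| ^ θ = 1 := by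
        rw [← Real.rpow_add hfyabs]; norm_num
      refine le_trans (le_of_eq ?_) h3
      rw [hcdef]
      calc C * (1 - θ) = C * (1 - θ) * (|f y| ^ (1 - θ - 1) * |f y| ^ θ) := by
            rw [h5]; ring
      _ = (1 - θ) * |f y| ^ (1 - θ - 1) * (C * |f y| ^ θ) := by ring
    set w : EuclideanSpace ℝ (Fin n) :=
      (InnerProductSpace.toDual ℝ (EuclideanSpace ℝ (Fin n))).symm G with hwdef
    have hwnorm : ‖w‖ = ‖G‖ := LinearIsometryEquiv.norm_map _ _
    have hwpos : 0 < ‖w‖ := by rw [hwnorm]; linarith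
    have hGw : G (-w) = -‖w‖ ^ 2 := by
      have h1 : (inner ℝ w (-w) : ℝ) = G (-w) := InnerProductSpace.toDual_symm_apply
      rw [← h1, inner_neg_right, real_inner_self_eq_norm_sq]
    -- curve
    set γ : ℝ → EuclideanSpace ℝ (Fin n) := fun t => y + t • (-w) with hγdef
    have hγ0 : γ 0 = y := by simp [hγdef]
    have hγd : HasDerivAt γ (-w) 0 := by
      have h := ((hasDerivAt_id (0:ℝ)).smul_const (-w)).const_add y
      simpa [hγdef] using h
    have hh : HasDerivAt (fun t => g (γ t)) (-‖w‖ ^ 2) 0 := by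
      have h := HasFDerivAt.comp_hasDerivAt (0:ℝ) (by rw [hγ0]; exact hG) hγd
      rw [hGw] at h
      exact h
    -- slope bound
    have hev : ∀ᶠ t in 𝓝[>] (0:ℝ), -((c/2) * ‖w‖) ≤ slope (fun t => g (γ t)) 0 t := by
      have hγcont : Tendsto γ (𝓝 0) (𝓝 y) := hγ0 ▸ hγd.continuousAt
      have hmem : ∀ᶠ t in 𝓝 (0:ℝ), γ t ∈ ball p (2 * r) :=
        hγcont.eventually (isOpen_ball.mem_nhds hyball)
      filter_upwards [nhdsWithin_le_nhds hmem, self_mem_nhdsWithin] with t hmemt htpos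
      have htpos' : (0:ℝ) < t := htpos
      have hγtK : γ t ∈ K := ball_subset_closedBall hmemt
      have hminineq : g y + (c / 2) * dist x y ≤ g (γ t) + (c / 2) * dist x (γ t) := by
        have h := hymin hγtK
        simpa [hFdef] using h
      have hdist : dist x (γ t) ≤ dist x y + t * ‖w‖ := by
        have h1 : dist y (γ t) = t * ‖w‖ := by
          simp only [hγdef, dist_eq_norm]
          have h2 : y - (y + t • (-w)) = t • w := by rw [smul_neg]; abel
          rw [h2, show ‖t • w‖ = ‖t‖ * ‖w‖ from norm_smul t w,
            Real.norm_eq_abs, abs_of_pos htpos']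
        calc dist x (γ t) ≤ dist x y + dist y (γ t) := dist_triangle x y (γ t)
        _ = dist x y + t * ‖w‖ := by rw [h1]
      have key : g y - (c / 2) * (t * ‖w‖) ≤ g (γ t) := by nlinarith
      have key2 : -((c/2) * ‖w‖) * t ≤ g (γ t) - g (γ 0) := by
        rw [hγ0]; nlinarith
      rw [slope_def_field, sub_zero, le_div_iff₀ htpos']
      simpa using key2
    have hlim : Tendsto (slope (fun t => g (γ t)) 0) (𝓝[>] (0:ℝ)) (𝓝 (-‖w‖ ^ 2)) :=
      (hasDerivAt_iff_tendsto_slope.1 hh).mono_left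
        (nhdsWithin_mono 0 fun t (ht : 0 < t) => (Set.mem_compl_singleton_iff).2 ht.ne')
    have hfinal : -((c/2) * ‖w‖) ≤ -‖w‖ ^ 2 := ge_of_tendsto hlim hev
    have hwle : ‖w‖ ≤ c / 2 := by nlinarith
    have : c ≤ c / 2 := le_trans (hGc.trans hwnorm.ge) hwle
    linarith
  have hyZ : y ∈ Z := by rw [hZ]; exact ⟨hKU hyK, hfy⟩
  calc infDist x Z ≤ dist x y := infDist_le_dist_of_mem hyZ
  _ ≤ 2 / c * g x := hdxy
  _ = 2 / c * |f x| ^ (1 - θ) := rfl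
end
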